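/- arXiv:1602.06751 — 2 statements merged into one kernel-verified Lean document; each statement's English description precedes it below -/
import Mathlib

section
/- Let v, k, t be integers with v > k > t ≥ 2, let X be a v-set and X = X1 ∪ X2 a partition of X with |X1| = v1 and |X2| = v2. For i = 0,…,t let D_i = (X1, 𝓑^(i)) be the complete i-(v1, i, 1) design (whose blocks are all i-subsets of X1), and for i = t+1,…,k let D_i = (X1, 𝓑^(i)) be a simple t-(v1, i, λ^(i)_t) design; for 0 ≤ s ≤ t let λ^(i)_s denote the number of blocks of D_i containing any fixed s-subset of X1 (so D_i is also an s-(v1, i, λ^(i)_s) design). Similarly, for i = 0,…,t let D̄_i = (X2, 𝓑̄^(i)) be the complete i-(v2, i, 1) design, for i = t+1,…,k let D̄_i = (X2, 𝓑̄^(i)) be a simple t-(v2, i, λ̄^(i)_t) design, and let λ̄^(i)_s be defined analogously. For i = 0,…,k set 𝓑_(i,k−i) = { B_i ∪ B̄_{k−i} : B_i ∈ 𝓑^(i), B̄_{k−i} ∈ 𝓑̄^(k−i) }. Let u_0,…,u_k ∈ {0,1} and let 𝓑 be the union over i = 0,…,k of those 𝓑_(i,k−i) with u_i = 1. For s = 0,…,t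 define L_{s,t−s} = Σ_{i=0}^{k} u_i · λ^(i)_s · λ̄^(k−i)_{t−s}. If L_{0,t} = L_{1,t−1} = ⋯ = L_{t,0} = Λ for a positive integer Λ, then (X, 𝓑) is a simple t-(v, k, Λ) design. -/
/-!
A block `B ∪ B̄` with `B ⊆ X1`, `B̄ ⊆ X2` determines `B = (B ∪ B̄) ∩ X1` and `B̄ = (B ∪ B̄) ∩ X2`,
so the selected families `𝓑_(i,k-i)` are pairwise disjoint (they differ in `|b ∩ X1|`) and
`B ↦ B ∪ B̄` is injective on each of them. A `t`-set `T` lies in `B ∪ B̄` iff `T ∩ X1 ⊆ B` and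
`T ∩ X2 ⊆ B̄`, so with `s = |T ∩ X1|` the family `𝓑_(i,k-i)` contributes
`λ^(i)_s · λ̄^(k-i)_{t-s}` blocks through `T`, and summing over the selected `i` gives `L_{s,t-s} = Λ`.
-/

namespace Finset

variable {α : Type*} [DecidableEq α] {X₁ X₂ B C T : Finset α}

theorem union_inter_eq_left_of_disjoint (hX : Disjoint X₁ X₂) (hB : B ⊆ X₁) (hC : C ⊆ X₂) :
    (B ∪ C) ∩ X₁ = B := by
  rw [union_inter_distrib_right, inter_eq_left.mpr hB,
    disjoint_iff_inter_eq_empty.mp (hX.symm.mono_left hC), union_empty]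

theorem union_inter_eq_right_of_disjoint (hX : Disjoint X₁ X₂) (hB : B ⊆ X₁) (hC : C ⊆ X₂) :
    (B ∪ C) ∩ X₂ = C := by
  rw [union_comm]
  exact union_inter_eq_left_of_disjoint hX.symm hC hB

theorem subset_union_iff_of_disjoint (hX : Disjoint X₁ X₂) (hT : T ⊆ X₁ ∪ X₂)
    (hB : B ⊆ X₁) (hC : C ⊆ X₂) : T ⊆ B ∪ C ↔ T ∩ X₁ ⊆ B ∧ T ∩ X₂ ⊆ C := by
  constructor
  · intro hTBC
    constructor
    · rw [← union_inter_eq_left_of_disjoint hX hB hC]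
      exact inter_subset_inter_right hTBC
    · rw [← union_inter_eq_right_of_disjoint hX hB hC]
      exact inter_subset_inter_right hTBC
  · rintro ⟨h₁, h₂⟩
    calc T = T ∩ X₁ ∪ T ∩ X₂ := by rw [← inter_union_distrib_left, inter_eq_left.mpr hT]
      _ ⊆ B ∪ C := union_subset_union h₁ h₂

variable {A A' : Finset (Finset α)}

theorem inter_mem_of_mem_image_union_product (hX : Disjoint X₁ X₂)
    (hA : ∀ b ∈ A, b ⊆ X₁) (hA' : ∀ c ∈ A', c ⊆ X₂) {b : Finset α}
    (hb : b ∈ (A ×ˢ A').image (fun p => p.1 ∪ p.2)) : b ∩ X₁ ∈ A := by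
  obtain ⟨⟨B, C⟩, hBC, rfl⟩ := mem_image.mp hb
  obtain ⟨hBA, hCA'⟩ := mem_product.mp hBC
  rwa [union_inter_eq_left_of_disjoint hX (hA B hBA) (hA' C hCA')]

theorem injOn_union_product (hX : Disjoint X₁ X₂)
    (hA : ∀ b ∈ A, b ⊆ X₁) (hA' : ∀ c ∈ A', c ⊆ X₂) :
    Set.InjOn (fun p : Finset α × Finset α => p.1 ∪ p.2) ↑(A ×ˢ A') := by
  rintro ⟨B, C⟩ hBC ⟨D, E⟩ hDE (h : B ∪ C = D ∪ E)
  obtain ⟨hB, hC⟩ := mem_product.mp hBC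
  obtain ⟨hD, hE⟩ := mem_product.mp hDE
  have h₁ := congrArg (· ∩ X₁) h
  have h₂ := congrArg (· ∩ X₂) h
  simp only [union_inter_eq_left_of_disjoint hX (hA _ hB) (hA' _ hC),
    union_inter_eq_left_of_disjoint hX (hA _ hD) (hA' _ hE),
    union_inter_eq_right_of_disjoint hX (hA _ hB) (hA' _ hC),
    union_inter_eq_right_of_disjoint hX (hA _ hD) (hA' _ hE)] at h₁ h₂
  rw [h₁, h₂]

theorem card_filter_image_union_product (hX : Disjoint X₁ X₂)
    (hA : ∀ b ∈ A, b ⊆ X₁) (hA' : ∀ c ∈ A', c ⊆ X₂) (hT : T ⊆ X₁ ∪ X₂) :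
    (((A ×ˢ A').image (fun p => p.1 ∪ p.2)).filter (T ⊆ ·)).card =
      (A.filter (T ∩ X₁ ⊆ ·)).card * (A'.filter (T ∩ X₂ ⊆ ·)).card := by
  rw [filter_image, card_image_of_injOn
    ((injOn_union_product hX hA hA').mono (coe_subset.mpr (filter_subset _ _))),
    ← card_product, ← filter_product]
  refine congrArg card (filter_congr fun p hp => ?_)
  obtain ⟨hB, hC⟩ := mem_product.mp hp
  exact subset_union_iff_of_disjoint hX hT (hA _ hB) (hA' _ hC)

theorem mem_image_union_product (hX : Disjoint X₁ X₂) {i j : ℕ}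
    (hA : ∀ b ∈ A, b ⊆ X₁ ∧ b.card = i) (hA' : ∀ c ∈ A', c ⊆ X₂ ∧ c.card = j) {b : Finset α}
    (hb : b ∈ (A ×ˢ A').image (fun p => p.1 ∪ p.2)) : b ⊆ X₁ ∪ X₂ ∧ b.card = i + j := by
  obtain ⟨⟨B, C⟩, hBC, rfl⟩ := mem_image.mp hb
  obtain ⟨hB, hC⟩ := mem_product.mp hBC
  obtain ⟨hB₁, rfl⟩ := hA B hB
  obtain ⟨hC₂, rfl⟩ := hA' C hC
  exact ⟨union_subset_union hB₁ hC₂, card_union_of_disjoint (hX.mono hB₁ hC₂)⟩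

theorem card_filter_biUnion_of_forall_eq {ι β : Type*} [DecidableEq β] {s : Finset ι}
    {𝓑 : ι → Finset β} (g : β → ι) (hg : ∀ i ∈ s, ∀ b ∈ 𝓑 i, g b = i) (p : β → Prop)
    [DecidablePred p] : ((s.biUnion 𝓑).filter p).card = ∑ i ∈ s, ((𝓑 i).filter p).card := by
  rw [filter_biUnion, card_biUnion]
  intro i hi j hj hij
  refine disjoint_left.mpr fun b hbi hbj => hij ?_
  rw [← hg i hi b (mem_filter.mp hbi).1, ← hg j hj b (mem_filter.mp hbj).1]

end Finset

open Finset

theorem recursive_construction_simple_t_design_general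
    (k t : ℕ)
    (X X1 X2 : Finset ℕ)
    (hunion : X1 ∪ X2 = X) (hdisj : Disjoint X1 X2)
    (A Abar : ℕ → Finset (Finset ℕ))
    (lam lamBar : ℕ → ℕ → ℕ)
    -- the blocks of `A i` are `i`-subsets of `X1`, those of `Abar i` are
    -- `i`-subsets of `X2`
    (hAblocks : ∀ i ≤ k, ∀ b ∈ A i, b ⊆ X1 ∧ b.card = i)
    (hAbarblocks : ∀ i ≤ k, ∀ b ∈ Abar i, b ⊆ X2 ∧ b.card = i)
    -- `lam i s` is the number of blocks of `A i` containing any fixed `s`-subset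
    -- of `X1` (so `A i` is an `s-(v1, i, lam i s)` design), `0 ≤ s ≤ t`
    (hlam : ∀ i ≤ k, ∀ s ≤ t, ∀ S ⊆ X1, S.card = s →
      ((A i).filter (fun b => S ⊆ b)).card = lam i s)
    (hlamBar : ∀ i ≤ k, ∀ s ≤ t, ∀ S ⊆ X2, S.card = s →
      ((Abar i).filter (fun b => S ⊆ b)).card = lamBar i s)
    (u : ℕ → ℕ) (hu : ∀ i ≤ k, u i = 0 ∨ u i = 1)
    (Λ : ℕ)
    -- the equalities L_{0,t} = L_{1,t-1} = ⋯ = L_{t,0} = Λ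
    (hL : ∀ s ≤ t, (∑ i ∈ Finset.range (k + 1),
      u i * (lam i s * lamBar (k - i) (t - s))) = Λ) :
    (∀ b ∈ (Finset.range (k + 1)).biUnion (fun i =>
        if u i = 1 then ((A i) ×ˢ (Abar (k - i))).image (fun p => p.1 ∪ p.2)
        else ∅),
      b ⊆ X ∧ b.card = k) ∧
    (∀ T ⊆ X, T.card = t →
      (((Finset.range (k + 1)).biUnion (fun i =>
        if u i = 1 then ((A i) ×ˢ (Abar (k - i))).image (fun p => p.1 ∪ p.2)
        else ∅)).filter (fun b => T ⊆ b)).card = Λ) := by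
  subst hunion
  set 𝓑 : ℕ → Finset (Finset ℕ) := fun i =>
    if u i = 1 then ((A i) ×ˢ (Abar (k - i))).image (fun p => p.1 ∪ p.2) else ∅
  have hA : ∀ i ∈ range (k + 1), ∀ b ∈ A i, b ⊆ X1 ∧ b.card = i :=
    fun i hi => hAblocks i (mem_range_succ_iff.mp hi)
  have hAbar (i : ℕ) : ∀ b ∈ Abar (k - i), b ⊆ X2 ∧ b.card = k - i :=
    hAbarblocks (k - i) (Nat.sub_le k i)
  have h𝓑 {i} (hi : i ∈ range (k + 1)) {b} (hb : b ∈ 𝓑 i) :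
      (b ⊆ X1 ∪ X2 ∧ b.card = k) ∧ (b ∩ X1).card = i := by
    by_cases hui : u i = 1 <;> simp only [𝓑, hui, if_true, if_false, notMem_empty] at hb
    refine ⟨?_, (hA i hi _ (inter_mem_of_mem_image_union_product hdisj
      (fun b hb => (hA i hi b hb).1) (fun c hc => (hAbar i c hc).1) hb)).2⟩
    have := mem_image_union_product hdisj (hA i hi) (hAbar i) hb
    rwa [Nat.add_sub_cancel' (mem_range_succ_iff.mp hi)] at this
  refine ⟨fun b hb => ?_, fun T hT hTcard => ?_⟩
  · obtain ⟨i, hi, hbi⟩ := mem_biUnion.mp hb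
    exact (h𝓑 hi hbi).1
  have hTsplit : (T ∩ X1).card + (T ∩ X2).card = t := by
    rw [← card_union_of_disjoint (hdisj.mono inter_subset_right inter_subset_right),
      ← inter_union_distrib_left, inter_eq_left.mpr hT, hTcard]
  rw [card_filter_biUnion_of_forall_eq (fun b => (b ∩ X1).card) (fun i hi b hb => (h𝓑 hi hb).2),
    ← hL (T ∩ X1).card (by omega)]
  refine sum_congr rfl fun i hi => ?_
  rcases hu i (mem_range_succ_iff.mp hi) with hui | hui
  · simp [𝓑, hui]
  simp only [𝓑, hui, if_true, one_mul]
  rw [card_filter_image_union_product hdisj (fun b hb => (hA i hi b hb).1)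
    (fun c hc => (hAbar i c hc).1) hT,
    hlam i (mem_range_succ_iff.mp hi) _ (by omega) _ inter_subset_right rfl,
    hlamBar (k - i) (Nat.sub_le k i) (t - (T ∩ X1).card) (by omega) _ inter_subset_right
      (by omega)]

/-- **Recursive construction of simple t-designs** (Theorem 1 of the paper).
Given a partition `X = X1 ∪ X2` of a `v`-set, ingredient designs `A i` on `X1`
(complete `i-(v1,i,1)` designs for `i ≤ t`, simple `t-(v1,i,λ^(i)_t)` designs
for `t < i ≤ k`, with `s`-level indices `lam i s`), analogous ingredient
designs `Abar i` on `X2` with indices `lamBar i s`, and selectors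
`u i ∈ {0,1}`, if all the quantities
`L_{s,t-s} = Σ_{i=0}^k u i * lam i s * lamBar (k-i) (t-s)` are equal to a
positive integer `Λ`, then the union `𝓑` of the selected block sets
`𝓑_(i,k-i) = {B ∪ B̄ : B ∈ A i, B̄ ∈ Abar (k-i)}` forms a simple
`t-(v,k,Λ)` design on `X`. (Simplicity is expressed by `𝓑` being a
`Finset`, i.e. a set of distinct blocks.) -/
theorem recursive_construction_simple_t_design
    (v k t v1 v2 : ℕ) (hvk : v > k) (hkt : k > t) (ht : 2 ≤ t)
    (X X1 X2 : Finset ℕ)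
    (hXcard : X.card = v) (hX1card : X1.card = v1) (hX2card : X2.card = v2)
    (hunion : X1 ∪ X2 = X) (hdisj : Disjoint X1 X2)
    (A Abar : ℕ → Finset (Finset ℕ))
    (lam lamBar : ℕ → ℕ → ℕ)
    -- the blocks of `A i` are `i`-subsets of `X1`, those of `Abar i` are
    -- `i`-subsets of `X2`
    (hAblocks : ∀ i ≤ k, ∀ b ∈ A i, b ⊆ X1 ∧ b.card = i)
    (hAbarblocks : ∀ i ≤ k, ∀ b ∈ Abar i, b ⊆ X2 ∧ b.card = i)
    -- for `i ≤ t` the ingredient designs are the complete `i-(v_j, i, 1)` designs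
    (hAcomplete : ∀ i ≤ t, A i = X1.powersetCard i)
    (hAbarcomplete : ∀ i ≤ t, Abar i = X2.powersetCard i)
    -- `lam i s` is the number of blocks of `A i` containing any fixed `s`-subset
    -- of `X1` (so `A i` is an `s-(v1, i, lam i s)` design), `0 ≤ s ≤ t`
    (hlam : ∀ i ≤ k, ∀ s ≤ t, ∀ S ⊆ X1, S.card = s →
      ((A i).filter (fun b => S ⊆ b)).card = lam i s)
    (hlamBar : ∀ i ≤ k, ∀ s ≤ t, ∀ S ⊆ X2, S.card = s →
      ((Abar i).filter (fun b => S ⊆ b)).card = lamBar i s)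
    (u : ℕ → ℕ) (hu : ∀ i ≤ k, u i = 0 ∨ u i = 1)
    (Λ : ℕ) (hΛ : 0 < Λ)
    -- the equalities L_{0,t} = L_{1,t-1} = ⋯ = L_{t,0} = Λ
    (hL : ∀ s ≤ t, (∑ i ∈ Finset.range (k + 1),
      u i * (lam i s * lamBar (k - i) (t - s))) = Λ) :
    (∀ b ∈ (Finset.range (k + 1)).biUnion (fun i =>
        if u i = 1 then ((A i) ×ˢ (Abar (k - i))).image (fun p => p.1 ∪ p.2)
        else ∅),
      b ⊆ X ∧ b.card = k) ∧
    (∀ T ⊆ X, T.card = t →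
      (((Finset.range (k + 1)).biUnion (fun i =>
        if u i = 1 then ((A i) ×ˢ (Abar (k - i))).image (fun p => p.1 ∪ p.2)
        else ∅)).filter (fun b => T ⊆ b)).card = Λ) :=
  recursive_construction_simple_t_design_general k t X X1 X2 hunion hdisj A Abar lam lamBar hAblocks
    hAbarblocks hlam hlamBar u hu Λ hL
end

section
/- Let v > k > t ≥ 2 and let X = X1 ∪ X2 be a partition of a v-set X with |X1| = v1, |X2| = v2. For i = 0,…,t let D_i be the complete i-(v1,i,1) design on X1 and for i = t+1,…,k let D_i be a (possibly non-simple) t-(v1, i, λ^(i)_t) design, i.e. a multiset 𝓑^(i) of i-subsets of X1 in which every t-subset of X1 occurs with total multiplicity λ^(i)_t; define D̄_i on X2 analogously with indices λ̄^(i)_t, and let λ^(i)_s, λ̄^(i)_s denote the corresponding s-level indices for 0 ≤ s ≤ t. Let u_0,…,u_k ∈ {0,1} and let 𝓑 be the multiset union over i with u_i = 1 of the multisets { B_i ∪ B̄_{k−i} : B_i ∈ 𝓑^(i), B̄_{k−i} ∈ 𝓑̄^(k−i) } (counted with multiplicities). If L_{s,t−s} = Σ_{i=0}^{k} u_i ·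 λ^(i)_s · λ̄^(k−i)_{t−s} takes the same positive integer value Λ for all s = 0,…,t, then (X, 𝓑) is a (possibly non-simple) t-(v, k, Λ) design: every t-subset of X is contained in exactly Λ blocks of 𝓑 counted with multiplicity. -/
/-!
A `t`-subset `T` of `X₁ ∪ X₂` lies in a block `b₁ ∪ b₂` with `b₁ ⊆ X₁`, `b₂ ⊆ X₂` exactly
when `T ∩ X₁ ⊆ b₁` and `T ∩ X₂ ⊆ b₂`. If `T` meets `X₁` in `s` points, the selected product of
`A i` and `Abar (k - i)` therefore contains `T` in `lam i s * lamBar (k - i) (t - s)` blocks,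
and summing over the selected `i` gives `L_{s,t-s} = Λ`, independently of `s`.
-/

open Finset

namespace Finset

variable {α : Type*} [DecidableEq α]

theorem subset_union_iff_inter_subset {X₁ X₂ T b₁ b₂ : Finset α} (hX : Disjoint X₁ X₂)
    (hT : T ⊆ X₁ ∪ X₂) (hb₁ : b₁ ⊆ X₁) (hb₂ : b₂ ⊆ X₂) :
    T ⊆ b₁ ∪ b₂ ↔ T ∩ X₁ ⊆ b₁ ∧ T ∩ X₂ ⊆ b₂ := by
  rw [disjoint_left] at hX
  simp only [subset_iff, mem_union, mem_inter] at *
  grind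

theorem card_inter_add_card_inter {X₁ X₂ T : Finset α} (hX : Disjoint X₁ X₂)
    (hT : T ⊆ X₁ ∪ X₂) : #(T ∩ X₁) + #(T ∩ X₂) = #T := by
  rw [← card_union_of_disjoint (hX.mono inter_subset_right inter_subset_right),
    ← inter_union_distrib_left, inter_eq_left.mpr hT]

end Finset

namespace Multiset

variable {ι α β γ : Type*}

theorem countP_sum (p : α → Prop) [DecidablePred p] (s : Finset ι) (f : ι → Multiset α) :
    countP p (∑ i ∈ s, f i) = ∑ i ∈ s, countP p (f i) :=
  map_sum (countPAddMonoidHom p) ..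

theorem card_filter_bind_map_eq_mul (A : Multiset α) (B : Multiset β) (f : α → β → γ)
    (P : γ → Prop) (p : α → Prop) (q : β → Prop) [DecidablePred P] [DecidablePred p]
    [DecidablePred q] (h : ∀ a ∈ A, ∀ b ∈ B, P (f a b) ↔ p a ∧ q b) :
    card ((A.bind fun a => B.map (f a)).filter P) = card (A.filter p) * card (B.filter q) := by
  simp only [← countP_eq_card_filter]
  induction A using Multiset.induction_on with
  | empty => simp
  | cons a A ih =>
    have hrow : countP P (B.map (f a)) = if p a then countP q B else 0 := by
      rw [countP_map, ← countP_eq_card_filter]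
      split_ifs with ha
      · exact countP_congr rfl fun b hb => by simp [h a (mem_cons_self a A) b hb, ha]
      · exact countP_eq_zero.mpr fun b hb => by simp [h a (mem_cons_self a A) b hb, ha]
    rw [cons_bind, countP_add, hrow, ih fun a' ha' => h a' (mem_cons_of_mem ha'), countP_cons]
    split_ifs <;> ring

end Multiset

section UnionOfBlocks

variable {α : Type*} [DecidableEq α] {X₁ X₂ : Finset α} {A B : Multiset (Finset α)}

theorem subset_and_card_of_mem_bind_union (hX : Disjoint X₁ X₂) {i j : ℕ}
    (hA : ∀ b ∈ A, b ⊆ X₁ ∧ #b = i) (hB : ∀ b ∈ B, b ⊆ X₂ ∧ #b = j) :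
    ∀ b ∈ A.bind (fun b₁ => B.map fun b₂ => b₁ ∪ b₂), b ⊆ X₁ ∪ X₂ ∧ #b = i + j := by
  simp only [Multiset.mem_bind, Multiset.mem_map]
  rintro _ ⟨b₁, hb₁, b₂, hb₂, rfl⟩
  obtain ⟨hb₁X, rfl⟩ := hA b₁ hb₁
  obtain ⟨hb₂X, rfl⟩ := hB b₂ hb₂
  exact ⟨union_subset_union hb₁X hb₂X, card_union_of_disjoint (hX.mono hb₁X hb₂X)⟩

theorem card_filter_superset_bind_union (hX : Disjoint X₁ X₂) {T : Finset α}
    (hT : T ⊆ X₁ ∪ X₂) (hA : ∀ b ∈ A, b ⊆ X₁) (hB : ∀ b ∈ B, b ⊆ X₂) :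
    Multiset.card ((A.bind fun b₁ => B.map fun b₂ => b₁ ∪ b₂).filter (T ⊆ ·)) =
      Multiset.card (A.filter (T ∩ X₁ ⊆ ·)) * Multiset.card (B.filter (T ∩ X₂ ⊆ ·)) :=
  Multiset.card_filter_bind_map_eq_mul _ _ _ _ _ _ fun _ hb₁ _ hb₂ =>
    subset_union_iff_inter_subset hX hT (hA _ hb₁) (hB _ hb₂)

end UnionOfBlocks

theorem recursive_construction_nonsimple_t_design_general
    (k t : ℕ)
    (X X1 X2 : Finset ℕ)
    (hunion : X1 ∪ X2 = X) (hdisj : Disjoint X1 X2)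
    (A Abar : ℕ → Multiset (Finset ℕ))
    (lam lamBar : ℕ → ℕ → ℕ)
    (hAblocks : ∀ i ≤ k, ∀ b ∈ A i, b ⊆ X1 ∧ b.card = i)
    (hAbarblocks : ∀ i ≤ k, ∀ b ∈ Abar i, b ⊆ X2 ∧ b.card = i)
    -- every `s`-subset of `X1` occurs in exactly `lam i s` blocks of `A i`,
    -- counted with multiplicity, for `0 ≤ s ≤ t`
    (hlam : ∀ i ≤ k, ∀ s ≤ t, ∀ S ⊆ X1, S.card = s →
      Multiset.card ((A i).filter (fun b => S ⊆ b)) = lam i s)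
    (hlamBar : ∀ i ≤ k, ∀ s ≤ t, ∀ S ⊆ X2, S.card = s →
      Multiset.card ((Abar i).filter (fun b => S ⊆ b)) = lamBar i s)
    (u : ℕ → ℕ)
    (Λ : ℕ)
    (hL : ∀ s ≤ t, (∑ i ∈ Finset.range (k + 1),
      u i * (lam i s * lamBar (k - i) (t - s))) = Λ) :
    (∀ b ∈ (∑ i ∈ Finset.range (k + 1),
        u i • ((A i).bind (fun b1 => (Abar (k - i)).map (fun b2 => b1 ∪ b2)))),
      b ⊆ X ∧ b.card = k) ∧
    (∀ T ⊆ X, T.card = t →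
      Multiset.card
        ((∑ i ∈ Finset.range (k + 1),
          u i • ((A i).bind (fun b1 => (Abar (k - i)).map (fun b2 => b1 ∪ b2)))).filter
          (fun b => T ⊆ b)) = Λ) := by
  refine ⟨fun b hb => ?_, fun T hT hTcard => ?_⟩
  · obtain ⟨i, hi, hbi⟩ := Multiset.mem_sum.mp hb
    have hik : i ≤ k := Nat.lt_succ_iff.mp (mem_range.mp hi)
    have hblock := subset_and_card_of_mem_bind_union hdisj (hAblocks i hik)
      (hAbarblocks (k - i) (k.sub_le i)) b (Multiset.mem_of_mem_nsmul hbi)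
    rwa [hunion, Nat.add_sub_cancel' hik] at hblock
  · rw [← hunion] at hT
    have hsplit := card_inter_add_card_inter hdisj hT
    have hst : #(T ∩ X1) ≤ t := by omega
    rw [← hL _ hst, ← Multiset.countP_eq_card_filter, Multiset.countP_sum]
    refine sum_congr rfl fun i hi => ?_
    have hik : i ≤ k := Nat.lt_succ_iff.mp (mem_range.mp hi)
    rw [Multiset.countP_nsmul, Multiset.countP_eq_card_filter,
      card_filter_superset_bind_union hdisj hT (fun b hb => (hAblocks i hik b hb).1)
        (fun b hb => (hAbarblocks (k - i) (k.sub_le i) b hb).1),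
      hlam i hik _ hst _ inter_subset_right rfl,
      hlamBar (k - i) (k.sub_le i) (t - #(T ∩ X1)) (t.sub_le _) _ inter_subset_right (by omega)]

/-- Multiset (possibly non-simple) version of the recursive construction:
with ingredient designs given as multisets `A i` of `i`-subsets of `X1`
(complete for `i ≤ t`) with `s`-level indices `lam i s`, analogous
multisets `Abar i` on `X2` with indices `lamBar i s`, and selectors
`u i ∈ {0,1}`, if all the quantities
`L_{s,t-s} = Σ_{i=0}^k u i * lam i s * lamBar (k-i) (t-s)` equal a positive
integer `Λ`, then the multiset union `𝓑` of the selected combined block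
multisets is a (possibly non-simple) `t-(v,k,Λ)` design: every `t`-subset of
`X` is contained in exactly `Λ` blocks counted with multiplicity. -/
theorem recursive_construction_nonsimple_t_design
    (v k t v1 v2 : ℕ) (hvk : v > k) (hkt : k > t) (ht : 2 ≤ t)
    (X X1 X2 : Finset ℕ)
    (hXcard : X.card = v) (hX1card : X1.card = v1) (hX2card : X2.card = v2)
    (hunion : X1 ∪ X2 = X) (hdisj : Disjoint X1 X2)
    (A Abar : ℕ → Multiset (Finset ℕ))
    (lam lamBar : ℕ → ℕ → ℕ)
    (hAblocks : ∀ i ≤ k, ∀ b ∈ A i, b ⊆ X1 ∧ b.card = i)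
    (hAbarblocks : ∀ i ≤ k, ∀ b ∈ Abar i, b ⊆ X2 ∧ b.card = i)
    (hAcomplete : ∀ i ≤ t, A i = (X1.powersetCard i).val)
    (hAbarcomplete : ∀ i ≤ t, Abar i = (X2.powersetCard i).val)
    -- every `s`-subset of `X1` occurs in exactly `lam i s` blocks of `A i`,
    -- counted with multiplicity, for `0 ≤ s ≤ t`
    (hlam : ∀ i ≤ k, ∀ s ≤ t, ∀ S ⊆ X1, S.card = s →
      Multiset.card ((A i).filter (fun b => S ⊆ b)) = lam i s)
    (hlamBar : ∀ i ≤ k, ∀ s ≤ t, ∀ S ⊆ X2, S.card = s →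
      Multiset.card ((Abar i).filter (fun b => S ⊆ b)) = lamBar i s)
    (u : ℕ → ℕ) (hu : ∀ i ≤ k, u i = 0 ∨ u i = 1)
    (Λ : ℕ) (hΛ : 0 < Λ)
    (hL : ∀ s ≤ t, (∑ i ∈ Finset.range (k + 1),
      u i * (lam i s * lamBar (k - i) (t - s))) = Λ) :
    (∀ b ∈ (∑ i ∈ Finset.range (k + 1),
        u i • ((A i).bind (fun b1 => (Abar (k - i)).map (fun b2 => b1 ∪ b2)))),
      b ⊆ X ∧ b.card = k) ∧
    (∀ T ⊆ X, T.card = t →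
      Multiset.card
        ((∑ i ∈ Finset.range (k + 1),
          u i • ((A i).bind (fun b1 => (Abar (k - i)).map (fun b2 => b1 ∪ b2)))).filter
          (fun b => T ⊆ b)) = Λ) :=
  recursive_construction_nonsimple_t_design_general k t X X1 X2 hunion hdisj A Abar lam lamBar
    hAblocks hAbarblocks hlam hlamBar u Λ hL
end
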